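/- arXiv:2405.03016 — 5 statements merged into one kernel-verified Lean document; each statement's English description precedes it below -/
import Mathlib

section
/- Let γ ∈ [0,1], τ > 0 and let m ≥ 1 be a natural number. Then the operator I + τT is invertible, and for every x ∈ H one has ‖(I + τT)^{-m}(T^γ x)‖ ≤ (mτ)^{-γ} ‖x‖. (Hilbert-space form of the uniform resolvent-power estimate ‖(I − τΔ_h)^{-m}‖_{ℒ(Ḣ_h^{α,q}, Ḣ_h^{β,q})} ≤ c (mτ)^{-(β−α)/2}, with γ = (β−α)/2.) -/
/-!
Through the functional calculus, `(1 + τT)^{-m} T^γ` is `F(T)` with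
`F(s) = s^γ / (1 + τs)^m`, so its norm is at most `sup_{s ≥ 0} F(s)`. For `s ≥ 0`,
`(mτs)^γ ≤ 1 + mτs ≤ (1 + τs)^m` (the first because `γ ∈ [0, 1]`, the second by
Bernoulli's inequality), which says exactly `F(s) ≤ (mτ)^{-γ}`.
-/

namespace Real

lemma rpow_le_one_add {u γ : ℝ} (hu : 0 ≤ u) (hγ0 : 0 ≤ γ) (hγ1 : γ ≤ 1) : u ^ γ ≤ 1 + u := by
  rcases le_total u 1 with h | h
  · linarith [rpow_le_one hu h hγ0]
  · linarith [rpow_le_self_of_one_le h hγ1]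

lemma inv_one_add_mul_pow_mul_rpow_le {γ τ s : ℝ} (hγ0 : 0 ≤ γ) (hγ1 : γ ≤ 1) (hτ : 0 < τ)
    {m : ℕ} (hm : 1 ≤ m) (hs : 0 ≤ s) :
    (1 + τ * s)⁻¹ ^ m * s ^ γ ≤ ((m : ℝ) * τ) ^ (-γ) := by
  have hmτ : 0 < (m : ℝ) * τ := by positivity
  have key : ((m : ℝ) * τ) ^ γ * s ^ γ ≤ (1 + τ * s) ^ m :=
    calc ((m : ℝ) * τ) ^ γ * s ^ γ = ((m : ℝ) * τ * s) ^ γ := (mul_rpow hmτ.le hs).symm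
      _ ≤ 1 + m * (τ * s) := by
        rw [← mul_assoc]; exact rpow_le_one_add (by positivity) hγ0 hγ1
      _ ≤ (1 + τ * s) ^ m := one_add_mul_le_pow (by linarith [mul_nonneg hτ.le hs]) m
  rwa [rpow_neg hmτ.le, inv_pow, inv_mul_le_iff₀ (by positivity),
    le_mul_inv_iff₀ (by positivity), mul_comm]

end Real

section CFC

variable {A : Type*} [CStarAlgebra A]

lemma cfc_one_add_mul (a : A) (τ : ℝ) (ha : IsSelfAdjoint a := by cfc_tac) :
    cfc (fun s : ℝ => 1 + τ * s) a = 1 + τ • a := by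
  rw [cfc_const_add 1 (fun s => τ * s) a, cfc_const_mul_id τ a, map_one]

variable [PartialOrder A] [StarOrderedRing A] {a : A} {τ : ℝ}

lemma one_add_mul_ne_zero_of_mem_spectrum (ha : 0 ≤ a) (hτ : 0 ≤ τ) :
    ∀ s ∈ spectrum ℝ a, 1 + τ * s ≠ 0 := fun s hs => by
  have := spectrum_nonneg_of_nonneg ha hs
  positivity

lemma isUnit_one_add_smul_of_nonneg (ha : 0 ≤ a) (hτ : 0 ≤ τ) : IsUnit (1 + τ • a) := by
  rw [← cfc_one_add_mul a τ]
  exact (isUnit_cfc_iff _ a).mpr (one_add_mul_ne_zero_of_mem_spectrum ha hτ)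

lemma inverse_one_add_smul_eq_cfc (ha : 0 ≤ a) (hτ : 0 ≤ τ) :
    Ring.inverse (1 + τ • a) = cfc (fun s : ℝ => (1 + τ * s)⁻¹) a := by
  rw [← cfc_one_add_mul a τ, cfc_inv _ a (one_add_mul_ne_zero_of_mem_spectrum ha hτ)]

lemma norm_inverse_one_add_smul_pow_mul_rpow_le (ha : 0 ≤ a) {γ : ℝ} (hγ0 : 0 ≤ γ)
    (hγ1 : γ ≤ 1) (hτ : 0 < τ) {m : ℕ} (hm : 1 ≤ m) :
    ‖Ring.inverse (1 + τ • a) ^ m * cfc (fun s : ℝ => s ^ γ) a‖ ≤ ((m : ℝ) * τ) ^ (-γ) := by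
  have hden := one_add_mul_ne_zero_of_mem_spectrum ha hτ.le
  have hinv : ContinuousOn (fun s : ℝ => (1 + τ * s)⁻¹) (spectrum ℝ a) :=
    (continuousOn_const.add (continuousOn_const.mul continuousOn_id)).inv₀ hden
  have hrpow : ContinuousOn (fun s : ℝ => s ^ γ) (spectrum ℝ a) :=
    (Real.continuous_rpow_const hγ0).continuousOn
  rw [inverse_one_add_smul_eq_cfc ha hτ.le, ← cfc_pow _ m a hinv,
    ← cfc_mul (fun s : ℝ => (1 + τ * s)⁻¹ ^ m) _ a (hinv.pow m) hrpow]
  refine norm_cfc_le (by positivity) fun s hs => ?_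
  have hs0 := spectrum_nonneg_of_nonneg ha hs
  rw [Real.norm_of_nonneg (by positivity)]
  exact Real.inv_one_add_mul_pow_mul_rpow_le hγ0 hγ1 hτ hm hs0

end CFC

/-- Hilbert-space form of the uniform resolvent-power estimate: if `T` is a bounded
self-adjoint positive operator on a complex Hilbert space, `γ ∈ [0,1]`, `τ > 0` and
`m ≥ 1`, then `I + τT` is invertible and `‖(I + τT)^{-m}(T^γ x)‖ ≤ (mτ)^{-γ} ‖x‖`,
where `T^γ` is given by the continuous functional calculus. -/
theorem resolvent_power_estimate
    (H : Type*) [NormedAddCommGroup H] [InnerProductSpace ℂ H] [CompleteSpace H]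
    (T : H →L[ℂ] H) (hT : T.IsPositive)
    (γ : ℝ) (hγ0 : 0 ≤ γ) (hγ1 : γ ≤ 1) (τ : ℝ) (hτ : 0 < τ)
    (m : ℕ) (hm : 1 ≤ m) :
    IsUnit (1 + τ • T) ∧
      ∀ x : H,
        ‖(Ring.inverse (1 + τ • T) ^ m) (cfc (fun s : ℝ => s ^ γ) T x)‖ ≤
          ((m : ℝ) * τ) ^ (-γ) * ‖x‖ := by
  have hT₀ : 0 ≤ T := T.nonneg_iff_isPositive.mpr hT
  refine ⟨isUnit_one_add_smul_of_nonneg hT₀ hτ.le, fun x => ?_⟩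
  calc ‖(Ring.inverse (1 + τ • T) ^ m) (cfc (fun s : ℝ => s ^ γ) T x)‖
      = ‖(Ring.inverse (1 + τ • T) ^ m * cfc (fun s : ℝ => s ^ γ) T) x‖ := rfl
    _ ≤ ‖Ring.inverse (1 + τ • T) ^ m * cfc (fun s : ℝ => s ^ γ) T‖ * ‖x‖ :=
      ContinuousLinearMap.le_opNorm _ _
    _ ≤ ((m : ℝ) * τ) ^ (-γ) * ‖x‖ := by
      gcongr
      exact norm_inverse_one_add_smul_pow_mul_rpow_le hT₀ hγ0 hγ1 hτ hm
end

section
/- Let E be a real inner product space, let u, w ∈ E, and let m ≥ 1 be a natural number. Then ‖u + w‖^{2m} ≤ ‖u‖^{2m} + 2m ⟪u + w, w⟫ ∫₀¹ ‖u + θw‖^{2m−2} dθ. (This is the one-sided Taylor bound obtained from d/dθ ‖g(θ)‖^{2m} ≤ 2m ‖g(θ)‖^{2m−2} ⟪g(1), g′(θ)⟫ for the affine path g(θ) = u + θw.) -/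
/-!
Along the path `g θ = u + θ • w` the derivative of `‖g θ‖ ^ (2m)` is
`2m ⟪g θ, w⟫ ‖g θ‖ ^ (2m - 2)`, and `⟪g θ, w⟫ = ⟪g 1, w⟫ - (1 - θ) ‖w‖²` is at most
`⟪g 1, w⟫` for `θ ≤ 1`. Integrating the derivative over `[0, 1]` gives the bound.
-/

section

variable {E : Type*} [NormedAddCommGroup E] [InnerProductSpace ℝ E]

theorem hasDerivAt_norm_pow_two_mul {f : ℝ → E} {f' : E} {x : ℝ} (hf : HasDerivAt f f' x)
    (m : ℕ) :
    HasDerivAt (fun t ↦ ‖f t‖ ^ (2 * m))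
      ((2 * m : ℝ) * inner ℝ (f x) f' * ‖f x‖ ^ (2 * m - 2)) x := by
  have hsq : HasDerivAt (fun t ↦ (‖f t‖ ^ 2) ^ m)
      (m * (‖f x‖ ^ 2) ^ (m - 1) * (2 * inner ℝ (f x) f')) x :=
    hf.norm_sq.fun_pow m
  simp only [← pow_mul] at hsq
  convert hsq using 1
  rw [show 2 * m - 2 = 2 * (m - 1) by omega]
  ring

theorem inner_add_smul_le_inner_add (u w : E) {θ : ℝ} (hθ : θ ≤ 1) :
    inner ℝ (u + θ • w) w ≤ inner ℝ (u + w) w := by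
  have hdiff : inner ℝ (u + w) w - inner ℝ (u + θ • w) w = (1 - θ) * ‖w‖ ^ 2 := by
    simp only [inner_add_left, real_inner_smul_left, real_inner_self_eq_norm_sq]
    ring
  nlinarith [sq_nonneg ‖w‖]

end

theorem norm_pow_taylor_bound_general
    (E : Type*) [NormedAddCommGroup E] [InnerProductSpace ℝ E]
    (u w : E) (m : ℕ) :
    ‖u + w‖ ^ (2 * m) ≤
      ‖u‖ ^ (2 * m) +
        (2 * m : ℝ) * (inner ℝ (u + w) w : ℝ) *
          ∫ θ in (0:ℝ)..1, ‖u + θ • w‖ ^ (2 * m - 2) := by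
  have hderiv : ∀ θ : ℝ, HasDerivAt (fun θ : ℝ ↦ ‖u + θ • w‖ ^ (2 * m))
      (2 * m * inner ℝ (u + θ • w) w * ‖u + θ • w‖ ^ (2 * m - 2)) θ := fun θ ↦
    (hasDerivAt_norm_pow_two_mul (((hasDerivAt_id θ).smul_const w).const_add u) m).congr_deriv
      (by simp)
  calc ‖u + w‖ ^ (2 * m)
      = ‖u‖ ^ (2 * m) + ∫ θ in (0:ℝ)..1,
          2 * m * inner ℝ (u + θ • w) w * ‖u + θ • w‖ ^ (2 * m - 2) := by
        rw [intervalIntegral.integral_eq_sub_of_hasDerivAt (fun θ _ ↦ hderiv θ)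
          (Continuous.intervalIntegrable (by fun_prop) _ _)]
        simp
    _ ≤ ‖u‖ ^ (2 * m) + ∫ θ in (0:ℝ)..1,
          2 * m * inner ℝ (u + w) w * ‖u + θ • w‖ ^ (2 * m - 2) := by
        gcongr
        refine intervalIntegral.integral_mono_on zero_le_one
          (Continuous.intervalIntegrable (by fun_prop) _ _)
          (Continuous.intervalIntegrable (by fun_prop) _ _) fun θ hθ ↦ ?_
        gcongr
        exact inner_add_smul_le_inner_add u w hθ.2
    _ = _ := by rw [intervalIntegral.integral_const_mul]

/-- One-sided Taylor bound for the even power of the norm along the affine path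
`θ ↦ u + θw` in a real inner product space:
`‖u + w‖^{2m} ≤ ‖u‖^{2m} + 2m ⟪u + w, w⟫ ∫₀¹ ‖u + θw‖^{2m−2} dθ`. -/
theorem norm_pow_taylor_bound
    (E : Type*) [NormedAddCommGroup E] [InnerProductSpace ℝ E]
    (u w : E) (m : ℕ) (hm : 1 ≤ m) :
    ‖u + w‖ ^ (2 * m) ≤
      ‖u‖ ^ (2 * m) +
        (2 * m : ℝ) * (inner ℝ (u + w) w : ℝ) *
          ∫ θ in (0:ℝ)..1, ‖u + θ • w‖ ^ (2 * m - 2) :=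
  norm_pow_taylor_bound_general E u w m
end

section
/- Let θ₀ ∈ ℝ be such that ‖Z + θ₀M‖_{L^q} ≠ 0. Then the function φ(θ) := ‖Z + θM‖_{L^q}^p is differentiable at θ₀ with φ′(θ₀) = p ‖Z + θ₀M‖_{L^q}^{p−q} ⟨|Z + θ₀M|^{q−2}(Z + θ₀M), M⟩. -/
open MeasureTheory

/-!
Write `ψ(θ) = ∫ |Z + θM|^q`, so that `φ = ψ^(p/q)`. For `|θ| ≤ c` the
`θ`-derivative `q |Z + θM|^(q-2) (Z + θM) M` of the integrand is dominated by
`q (|Z| + c|M|)^(q-1) |M|`, which is integrable by Hölder's inequality with exponents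
`q/(q-1)` and `q`; hence `ψ` may be differentiated under the integral sign. Since `ψ(θ₀) > 0`,
the chain rule for `t ↦ t^(p/q)` finishes the computation.
-/

lemma MeasureTheory.MemLp.integrable_abs_rpow_sub_one_mul {S : Type*} [MeasurableSpace S]
    {μ : Measure S} {q : ℝ} {f g : S → ℝ} (hq : 1 < q) (hf : MemLp f (ENNReal.ofReal q) μ)
    (hg : MemLp g (ENNReal.ofReal q) μ) :
    Integrable (fun x => |f x| ^ (q - 1) * g x) μ := by
  have hf' : MemLp (fun x => |f x| ^ (q - 1)) (ENNReal.ofReal q.conjExponent) μ := by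
    have h := hf.norm_rpow_div (ENNReal.ofReal (q - 1))
    rwa [← ENNReal.ofReal_div_of_pos (by linarith), ENNReal.toReal_ofReal (by linarith)] at h
  have : ENNReal.HolderConjugate (ENNReal.ofReal q.conjExponent) (ENNReal.ofReal q) :=
    (Real.HolderConjugate.conjExponent hq).symm.ennrealOfReal
  exact hf'.integrable_mul hg

lemma hasDerivAt_abs_add_mul_rpow {q : ℝ} (hq : 1 < q) (z m θ : ℝ) :
    HasDerivAt (fun t => |z + t * m| ^ q) (q * (|z + θ * m| ^ (q - 2) * (z + θ * m) * m)) θ := by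
  simpa only [mul_assoc, Function.comp_def] using
    (hasDerivAt_abs_rpow (z + θ * m) hq).comp θ ((hasDerivAt_mul_const m).const_add z)

lemma norm_abs_rpow_sub_two_mul_mul_le {q z m θ c : ℝ} (hq : 1 < q) (hθ : |θ| ≤ c) :
    ‖|z + θ * m| ^ (q - 2) * (z + θ * m) * m‖ ≤ (|z| + c * |m|) ^ (q - 1) * |m| := by
  set u := z + θ * m
  have hu : |u| ≤ |z| + c * |m| :=
    calc |u| ≤ |z| + |θ| * |m| := by simpa only [abs_mul] using abs_add_le z (θ * m)
      _ ≤ |z| + c * |m| := by gcongr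
  have hpow : |u| ^ (q - 2) * |u| = |u| ^ (q - 1) := by
    rw [← Real.rpow_add_one' (abs_nonneg u) (by linarith)]
    ring_nf
  calc ‖|u| ^ (q - 2) * u * m‖ = |u| ^ (q - 1) * |m| := by
        rw [Real.norm_eq_abs, abs_mul, abs_mul, abs_of_nonneg (by positivity), hpow]
    _ ≤ (|z| + c * |m|) ^ (q - 1) * |m| := by gcongr

lemma hasDerivAt_integral_abs_add_mul_rpow {S : Type*} [MeasurableSpace S] {μ : Measure S}
    {q : ℝ} {Z M : S → ℝ} (hq : 1 < q) (hZ : MemLp Z (ENNReal.ofReal q) μ)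
    (hM : MemLp M (ENNReal.ofReal q) μ) (θ₀ : ℝ) :
    HasDerivAt (fun θ => ∫ x, |Z x + θ * M x| ^ q ∂μ)
      (q * ∫ x, |Z x + θ₀ * M x| ^ (q - 2) * (Z x + θ₀ * M x) * M x ∂μ) θ₀ := by
  set c := |θ₀| + 1
  have hu : ∀ θ : ℝ, MemLp (fun x => Z x + θ * M x) (ENNReal.ofReal q) μ := fun θ =>
    hZ.add (hM.const_mul θ)
  have hF_int : ∀ θ : ℝ, Integrable (fun x => |Z x + θ * M x| ^ q) μ := fun θ => by
    simpa [ENNReal.toReal_ofReal (by linarith : 0 ≤ q)] using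
      (hu θ).integrable_norm_rpow (by simp; linarith) ENNReal.ofReal_ne_top
  have hF'_meas : AEStronglyMeasurable
      (fun x => q * (|Z x + θ₀ * M x| ^ (q - 2) * (Z x + θ₀ * M x) * M x)) μ := by
    have hmeas : Measurable fun t : ℝ => |t| ^ (q - 2) * t := by fun_prop
    exact ((hmeas.comp_aemeasurable (hu θ₀).1.aemeasurable).aestronglyMeasurable.mul
      hM.1).const_mul q
  have hbound_int : Integrable (fun x => q * ((|Z x| + c * |M x|) ^ (q - 1) * |M x|)) μ := by
    refine (((hZ.norm.add (hM.norm.const_mul c)).integrable_abs_rpow_sub_one_mul hq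
      hM.norm).const_mul q).congr (ae_of_all _ fun x => ?_)
    simp only [Pi.add_apply, Real.norm_eq_abs,
      abs_of_nonneg (by positivity : 0 ≤ |Z x| + c * |M x|)]
  have h_bound : ∀ᵐ x ∂μ, ∀ θ ∈ Metric.ball (0 : ℝ) c,
      ‖q * (|Z x + θ * M x| ^ (q - 2) * (Z x + θ * M x) * M x)‖
        ≤ q * ((|Z x| + c * |M x|) ^ (q - 1) * |M x|) := by
    refine ae_of_all _ fun x θ hθ => ?_
    rw [norm_mul, Real.norm_of_nonneg (by linarith)]
    gcongr
    exact norm_abs_rpow_sub_two_mul_mul_le hq (mem_ball_zero_iff.mp hθ).le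
  have hball : Metric.ball (0 : ℝ) c ∈ nhds θ₀ :=
    Metric.isOpen_ball.mem_nhds (mem_ball_zero_iff.mpr (by simp [c]))
  have h := (hasDerivAt_integral_of_dominated_loc_of_deriv_le hball
    (Filter.Eventually.of_forall fun θ => (hF_int θ).1) (hF_int θ₀) hF'_meas h_bound hbound_int
    (ae_of_all _ fun x θ _ => hasDerivAt_abs_add_mul_rpow hq (Z x) (M x) θ)).2
  rwa [integral_const_mul] at h

lemma HasDerivAt.rpow_one_div_rpow {ψ : ℝ → ℝ} {q p d θ₀ : ℝ} (hq : q ≠ 0)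
    (hψ : HasDerivAt ψ (q * d) θ₀) (hψ_nonneg : ∀ θ, 0 ≤ ψ θ) (hψ₀ : ψ θ₀ ≠ 0) :
    HasDerivAt (fun θ => (ψ θ ^ (1 / q)) ^ p) (p * (ψ θ₀ ^ (1 / q)) ^ (p - q) * d) θ₀ := by
  have hfun : (fun θ => (ψ θ ^ (1 / q)) ^ p) = fun θ => ψ θ ^ (p / q) := by
    funext θ
    rw [← Real.rpow_mul (hψ_nonneg θ), one_div_mul_eq_div]
  have hexp : (ψ θ₀ ^ (1 / q)) ^ (p - q) = ψ θ₀ ^ (p / q - 1) := by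
    rw [← Real.rpow_mul (hψ_nonneg θ₀)]
    field_simp
  rw [hfun, hexp]
  convert hψ.rpow_const (p := p / q) (Or.inl hψ₀) using 1
  field_simp

theorem lq_norm_pow_hasDerivAt_general
    (S : Type*) [MeasurableSpace S] (μ : Measure S)
    (q p : ℝ) (hq2 : 2 ≤ q)
    (Z M : S → ℝ)
    (hZ : MemLp Z (ENNReal.ofReal q) μ) (hM : MemLp M (ENNReal.ofReal q) μ)
    (θ₀ : ℝ)
    (hne : (∫ x, |Z x + θ₀ * M x| ^ q ∂μ) ^ (1 / q) ≠ 0) :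
    HasDerivAt (fun θ : ℝ => ((∫ x, |Z x + θ * M x| ^ q ∂μ) ^ (1 / q)) ^ p)
      (p * ((∫ x, |Z x + θ₀ * M x| ^ q ∂μ) ^ (1 / q)) ^ (p - q) *
        ∫ x, |Z x + θ₀ * M x| ^ (q - 2) * (Z x + θ₀ * M x) * M x ∂μ) θ₀ := by
  have hq : 1 < q := by linarith
  have hψ_nonneg : ∀ θ : ℝ, 0 ≤ ∫ x, |Z x + θ * M x| ^ q ∂μ := fun θ =>
    integral_nonneg fun x => by positivity
  have hψ₀ : ∫ x, |Z x + θ₀ * M x| ^ q ∂μ ≠ 0 := by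
    rintro h
    exact hne (by rw [h, Real.zero_rpow (by positivity)])
  exact (hasDerivAt_integral_abs_add_mul_rpow hq hZ hM θ₀).rpow_one_div_rpow (by positivity)
    hψ_nonneg hψ₀

/-- First derivative of `θ ↦ ‖Z + θM‖_{L^q}^p`: at any `θ₀` with `‖Z + θ₀M‖_{L^q} ≠ 0`,
the function is differentiable with derivative
`p ‖Z + θ₀M‖_{L^q}^{p−q} ⟨|Z + θ₀M|^{q−2}(Z + θ₀M), M⟩`. -/
theorem lq_norm_pow_hasDerivAt
    (S : Type*) [MeasurableSpace S] (μ : Measure S) [SigmaFinite μ]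
    (q p : ℝ) (hq2 : 2 ≤ q) (hp2 : 2 < p)
    (Z M : S → ℝ)
    (hZ : MemLp Z (ENNReal.ofReal q) μ) (hM : MemLp M (ENNReal.ofReal q) μ)
    (θ₀ : ℝ)
    (hne : (∫ x, |Z x + θ₀ * M x| ^ q ∂μ) ^ (1 / q) ≠ 0) :
    HasDerivAt (fun θ : ℝ => ((∫ x, |Z x + θ * M x| ^ q ∂μ) ^ (1 / q)) ^ p)
      (p * ((∫ x, |Z x + θ₀ * M x| ^ q ∂μ) ^ (1 / q)) ^ (p - q) *
        ∫ x, |Z x + θ₀ * M x| ^ (q - 2) * (Z x + θ₀ * M x) * M x ∂μ) θ₀ :=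
  lq_norm_pow_hasDerivAt_general S μ q p hq2 Z M hZ hM θ₀ hne
end

section
/- Let (S, 𝒜, μ) be a measure space and let y, Y, ξ, η be real-valued functions in L⁴(μ) satisfying Y = y + ξ + η μ-almost everywhere. Then ∫_S η (y³ − Y³) dμ ≤ (9/8) ∫_S ξ² (y² + Y²) dμ. (This monotonicity estimate for the cubic nonlinearity is the elementary calculation underlying the L² error analysis of the Euler scheme.) -/
open MeasureTheory

/-!
Write `d = Y - y` and `q = y² + yY + Y² ≥ 0`, so that `y³ - Y³ = -d q`. Substituting
`η = d - ξ`, completing the square gives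
`η (y³ - Y³) = ξ² q / 4 - (d - ξ / 2)² q ≤ ξ² q / 4 ≤ (3/8) ξ² (y² + Y²)`
pointwise, and the estimate follows by integrating; both integrands are sums of products of
four `L⁴` functions, hence integrable by Hölder.
-/

lemma mul_cube_sub_cube_le (y Y ξ : ℝ) :
    (Y - y - ξ) * (y ^ 3 - Y ^ 3) ≤ 9 / 8 * (ξ ^ 2 * (y ^ 2 + Y ^ 2)) := by
  set q := y ^ 2 + y * Y + Y ^ 2
  have hq : 0 ≤ q := by nlinarith [sq_nonneg (y + Y), sq_nonneg y, sq_nonneg Y]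
  calc (Y - y - ξ) * (y ^ 3 - Y ^ 3) = ξ ^ 2 * q / 4 - (Y - y - ξ / 2) ^ 2 * q := by ring
    _ ≤ ξ ^ 2 * q / 4 := by nlinarith [mul_nonneg (sq_nonneg (Y - y - ξ / 2)) hq]
    _ ≤ 9 / 8 * (ξ ^ 2 * (y ^ 2 + Y ^ 2)) := by
      nlinarith [mul_nonneg (sq_nonneg ξ) (sq_nonneg (y - Y)),
        mul_nonneg (sq_nonneg ξ) (add_nonneg (sq_nonneg y) (sq_nonneg Y))]

instance : ENNReal.HolderTriple 4 4 2 where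
  inv_add_inv_eq_inv := by
    rw [← two_mul, show (4 : ENNReal) = 2 * 2 by norm_num, ENNReal.mul_inv (by simp) (by simp),
      ← mul_assoc, ENNReal.mul_inv_cancel (by simp) (by simp), one_mul]

lemma integrable_mul_mul_mul_of_memLp_four {S : Type*} [MeasurableSpace S] {μ : Measure S}
    {f g h k : S → ℝ} (hf : MemLp f 4 μ) (hg : MemLp g 4 μ)
    (hh : MemLp h 4 μ) (hk : MemLp k 4 μ) :
    Integrable (fun x => f x * g x * h x * k x) μ := by
  simpa only [Pi.mul_def, mul_assoc] using
    (hg.mul' hf (r := 2)).integrable_mul (hk.mul' hh (r := 2))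

theorem cubic_monotonicity_estimate_general
    (S : Type*) [MeasurableSpace S] (μ : Measure S)
    (y Y ξ η : S → ℝ)
    (hy : MemLp y 4 μ) (hY : MemLp Y 4 μ) (hξ : MemLp ξ 4 μ)
    (hdecomp : ∀ᵐ x ∂μ, Y x = y x + ξ x + η x) :
    ∫ x, η x * ((y x) ^ 3 - (Y x) ^ 3) ∂μ ≤
      (9 / 8 : ℝ) * ∫ x, (ξ x) ^ 2 * ((y x) ^ 2 + (Y x) ^ 2) ∂μ := by
  have hd : MemLp (fun x => Y x - y x - ξ x) 4 μ := (hY.sub hy).sub hξ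
  have hlhs : Integrable (fun x => (Y x - y x - ξ x) * (y x ^ 3 - Y x ^ 3)) μ :=
    ((integrable_mul_mul_mul_of_memLp_four hd hy hy hy).sub
      (integrable_mul_mul_mul_of_memLp_four hd hY hY hY)).congr (.of_forall fun x => by
        simp only [Pi.sub_apply]; ring)
  have hrhs : Integrable (fun x => ξ x ^ 2 * (y x ^ 2 + Y x ^ 2)) μ :=
    ((integrable_mul_mul_mul_of_memLp_four hξ hξ hy hy).add
      (integrable_mul_mul_mul_of_memLp_four hξ hξ hY hY)).congr (.of_forall fun x => by
        simp only [Pi.add_apply]; ring)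
  calc ∫ x, η x * (y x ^ 3 - Y x ^ 3) ∂μ
      = ∫ x, (Y x - y x - ξ x) * (y x ^ 3 - Y x ^ 3) ∂μ :=
        integral_congr_ae (hdecomp.mono fun x hx => by simp only [hx]; ring)
    _ ≤ ∫ x, 9 / 8 * (ξ x ^ 2 * (y x ^ 2 + Y x ^ 2)) ∂μ :=
        integral_mono hlhs (hrhs.const_mul _) fun x => mul_cube_sub_cube_le _ _ _
    _ = 9 / 8 * ∫ x, ξ x ^ 2 * (y x ^ 2 + Y x ^ 2) ∂μ := integral_const_mul _ _

/-- Monotonicity estimate for the cubic nonlinearity: if `Y = y + ξ + η` a.e. with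
`y, Y, ξ, η ∈ L⁴(μ)`, then `∫ η (y³ − Y³) dμ ≤ (9/8) ∫ ξ² (y² + Y²) dμ`. -/
theorem cubic_monotonicity_estimate
    (S : Type*) [MeasurableSpace S] (μ : Measure S)
    (y Y ξ η : S → ℝ)
    (hy : MemLp y 4 μ) (hY : MemLp Y 4 μ) (hξ : MemLp ξ 4 μ) (hη : MemLp η 4 μ)
    (hdecomp : ∀ᵐ x ∂μ, Y x = y x + ξ x + η x) :
    ∫ x, η x * ((y x) ^ 3 - (Y x) ^ 3) ∂μ ≤
      (9 / 8 : ℝ) * ∫ x, (ξ x) ^ 2 * ((y x) ^ 2 + (Y x) ^ 2) ∂μ :=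
  cubic_monotonicity_estimate_general S μ y Y ξ η hy hY hξ hdecomp
end

section
/- Let (S, 𝒜, μ) be a measure space and let u, v be real-valued functions belonging to L²(μ) ∩ L¹²(μ). Then u³ − v³ ∈ L^{3/2}(μ) and ‖u³ − v³‖_{L^{3/2}} ≤ (3/2) ‖u − v‖_{L²} (‖u‖_{L¹²}² + ‖v‖_{L¹²}²). (This Hölder estimate for the cubic difference is used to bound the nonlinear term in the pathwise error analysis.) -/
open MeasureTheory
open scoped ENNReal

/-!
Factor `u³ - v³ = (u - v)(u² + uv + v²)` and bound `|u² + uv + v²| ≤ 3/2 (u² + v²)`. Hölder's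
inequality with `2/3 = 1/2 + 1/6` then gives
`‖u³ - v³‖_{3/2} ≤ 3/2 ‖u - v‖_2 ‖u² + v²‖_6`, and the triangle inequality in `L⁶` together with
`‖u²‖_6 = ‖u‖_12²` finishes the estimate.
-/

lemma abs_cube_sub_cube_le (a b : ℝ) : |a ^ 3 - b ^ 3| ≤ |a - b| * (3 / 2 * (a ^ 2 + b ^ 2)) := by
  have hfac : a ^ 3 - b ^ 3 = (a - b) * (a ^ 2 + a * b + b ^ 2) := by ring
  have hquad : |a ^ 2 + a * b + b ^ 2| ≤ 3 / 2 * (a ^ 2 + b ^ 2) := by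
    rw [abs_le]
    constructor <;> nlinarith [sq_nonneg (a + b), sq_nonneg (a - b)]
  rw [hfac, abs_mul]
  exact mul_le_mul_of_nonneg_left hquad (abs_nonneg _)

namespace MeasureTheory

variable {α : Type*} {m : MeasurableSpace α} {μ : Measure α} {p q r : ℝ≥0∞}

lemma lpNorm_fun_mul_le {𝕜 : Type*} [NormedRing 𝕜] {φ f : α → 𝕜} [ENNReal.HolderTriple p q r]
    (hφ : MemLp φ p μ) (hf : MemLp f q μ) :
    lpNorm (fun x ↦ φ x * f x) r μ ≤ lpNorm φ p μ * lpNorm f q μ := by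
  rw [← toReal_eLpNorm (hf.mul' hφ (r := r)).1, ← toReal_eLpNorm hφ.1, ← toReal_eLpNorm hf.1,
    ← ENNReal.toReal_mul]
  have holder := eLpNorm_smul_le_mul_eLpNorm (p := p) (q := q) (r := r) hf.1 hφ.1
  exact ENNReal.toReal_mono (ENNReal.mul_ne_top hφ.eLpNorm_ne_top hf.eLpNorm_ne_top) holder

lemma MemLp.fun_sq {f : α → ℝ} (hf : MemLp f (p * 2) μ) : MemLp (fun x ↦ f x ^ 2) p μ := by
  simpa [Real.norm_eq_abs, ENNReal.mul_div_cancel_right] using hf.norm_rpow_div 2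

lemma lpNorm_fun_sq {f : α → ℝ} (hf : AEStronglyMeasurable f μ) :
    lpNorm (fun x ↦ f x ^ 2) p μ = lpNorm f (p * 2) μ ^ 2 := by
  have hsq : (fun x ↦ f x ^ 2) = fun x ↦ ‖f x‖ ^ (2 : ℝ) := by
    simp [Real.norm_eq_abs]
  rw [← toReal_eLpNorm (f := fun x ↦ f x ^ 2) (hf.pow 2), ← toReal_eLpNorm hf, hsq,
    eLpNorm_norm_rpow f two_pos, ENNReal.ofReal_ofNat, ← ENNReal.toReal_rpow]
  norm_cast

variable {u v : α → ℝ}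

lemma memLp_abs_sub_mul_sq_add_sq [ENNReal.HolderTriple p q r] (huv : MemLp (u - v) p μ)
    (hu : MemLp u (q * 2) μ) (hv : MemLp v (q * 2) μ) :
    MemLp (fun x ↦ |(u - v) x| * (3 / 2 * (u x ^ 2 + v x ^ 2))) r μ :=
  ((hu.fun_sq.add hv.fun_sq).const_mul (3 / 2)).mul' huv.abs

lemma MemLp.fun_cube_sub_cube [ENNReal.HolderTriple p q r] (huv : MemLp (u - v) p μ)
    (hu : MemLp u (q * 2) μ) (hv : MemLp v (q * 2) μ) :
    MemLp (fun x ↦ u x ^ 3 - v x ^ 3) r μ :=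
  (memLp_abs_sub_mul_sq_add_sq huv hu hv).mono' ((hu.1.pow 3).sub (hv.1.pow 3))
    (.of_forall fun x ↦ abs_cube_sub_cube_le (u x) (v x))

lemma lpNorm_fun_cube_sub_cube_le [ENNReal.HolderTriple p q r] (hq : 1 ≤ q)
    (huv : MemLp (u - v) p μ) (hu : MemLp u (q * 2) μ) (hv : MemLp v (q * 2) μ) :
    lpNorm (fun x ↦ u x ^ 3 - v x ^ 3) r μ ≤
      3 / 2 * lpNorm (u - v) p μ * (lpNorm u (q * 2) μ ^ 2 + lpNorm v (q * 2) μ ^ 2) := by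
  have hsq : MemLp (fun x ↦ u x ^ 2 + v x ^ 2) q μ := hu.fun_sq.add hv.fun_sq
  have hconst : lpNorm (fun x ↦ 3 / 2 * (u x ^ 2 + v x ^ 2)) q μ =
      3 / 2 * lpNorm (fun x ↦ u x ^ 2 + v x ^ 2) q μ := by
    rw [show (fun x ↦ 3 / 2 * (u x ^ 2 + v x ^ 2)) = (3 / 2 : ℝ) • fun x ↦ u x ^ 2 + v x ^ 2
      from rfl, lpNorm_const_smul]
    norm_num
  calc lpNorm (fun x ↦ u x ^ 3 - v x ^ 3) r μ
      ≤ lpNorm (fun x ↦ |(u - v) x| * (3 / 2 * (u x ^ 2 + v x ^ 2))) r μ :=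
        lpNorm_mono_real (memLp_abs_sub_mul_sq_add_sq huv hu hv)
          fun x ↦ abs_cube_sub_cube_le (u x) (v x)
    _ ≤ lpNorm (u - v) p μ * (3 / 2 * lpNorm (fun x ↦ u x ^ 2 + v x ^ 2) q μ) := by
        rw [← hconst, ← lpNorm_fun_abs huv.1]
        exact lpNorm_fun_mul_le huv.abs (hsq.const_mul _)
    _ ≤ lpNorm (u - v) p μ * (3 / 2 * (lpNorm u (q * 2) μ ^ 2 + lpNorm v (q * 2) μ ^ 2)) := by
        rw [← lpNorm_fun_sq hu.1, ← lpNorm_fun_sq hv.1]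
        gcongr
        · exact lpNorm_nonneg
        · exact lpNorm_add_le hu.fun_sq hq
    _ = 3 / 2 * lpNorm (u - v) p μ * (lpNorm u (q * 2) μ ^ 2 + lpNorm v (q * 2) μ ^ 2) := by ring

end MeasureTheory

/-- Hölder estimate for the cubic difference: if `u, v ∈ L²(μ) ∩ L¹²(μ)`, then
`u³ − v³ ∈ L^{3/2}(μ)` and
`‖u³ − v³‖_{L^{3/2}} ≤ (3/2) ‖u − v‖_{L²} (‖u‖_{L¹²}² + ‖v‖_{L¹²}²)`. -/
theorem cubic_difference_holder_estimate
    (S : Type*) [MeasurableSpace S] (μ : Measure S)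
    (u v : S → ℝ)
    (hu2 : MemLp u 2 μ) (hu12 : MemLp u 12 μ)
    (hv2 : MemLp v 2 μ) (hv12 : MemLp v 12 μ) :
    MemLp (fun x => (u x) ^ 3 - (v x) ^ 3) (ENNReal.ofReal (3 / 2)) μ ∧
      (∫ x, |(u x) ^ 3 - (v x) ^ 3| ^ ((3:ℝ) / 2) ∂μ) ^ ((2:ℝ) / 3) ≤
        (3 / 2 : ℝ) * (∫ x, |u x - v x| ^ (2:ℝ) ∂μ) ^ ((1:ℝ) / 2) *
          (((∫ x, |u x| ^ (12:ℝ) ∂μ) ^ ((1:ℝ) / 12)) ^ 2 +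
            ((∫ x, |v x| ^ (12:ℝ) ∂μ) ^ ((1:ℝ) / 12)) ^ 2) := by
  have : ENNReal.HolderTriple 2 6 (ENNReal.ofReal (3 / 2)) := ⟨by
    rw [← ENNReal.ofReal_ofNat 2, ← ENNReal.ofReal_ofNat 6,
      ← ENNReal.ofReal_inv_of_pos (by norm_num), ← ENNReal.ofReal_inv_of_pos (by norm_num),
      ← ENNReal.ofReal_inv_of_pos (by norm_num), ← ENNReal.ofReal_add (by norm_num) (by norm_num)]
    norm_num⟩
  have hu : MemLp u (6 * 2) μ := by norm_num [hu12]
  have hv : MemLp v (6 * 2) μ := by norm_num [hv12]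
  have hmem := MemLp.fun_cube_sub_cube (r := ENNReal.ofReal (3 / 2)) (hu2.sub hv2) hu hv
  have hle := lpNorm_fun_cube_sub_cube_le (r := ENNReal.ofReal (3 / 2)) (by norm_num)
    (hu2.sub hv2) hu hv
  refine ⟨hmem, ?_⟩
  rw [lpNorm_eq_integral_norm_rpow_toReal (by norm_num) (by norm_num) hmem.1,
    lpNorm_eq_integral_norm_rpow_toReal (by norm_num) (by norm_num) (hu2.sub hv2).1,
    lpNorm_eq_integral_norm_rpow_toReal (by norm_num) (by norm_num) hu.1,
    lpNorm_eq_integral_norm_rpow_toReal (by norm_num) (by norm_num) hv.1] at hle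
  norm_num [Real.norm_eq_abs] at hle ⊢
  exact hle
end
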